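/- Let G be a group carrying an invariant finitely additive probability measure μ. If A ⊆ G is a large ←IP₀ set and A = A_1 ∪ … ∪ A_r, then some A_i is a large ←IP₀ set. -/

import Mathlib

/-- A two-sided invariant finitely additive probability measure on a group `G`. -/
structure IsInvFAPM {G : Type*} [Group G] (μ : Set G → ℝ) : Prop where
  nonneg : ∀ A : Set G, 0 ≤ μ A
  total : μ (Set.univ : Set G) = 1
  additive : ∀ A B : Set G, Disjoint A B → μ (A ∪ B) = μ A + μ B
  left_invariant : ∀ (g : G) (A : Set G), μ ((g * ·) '' A) = μ A
  right_invariant : ∀ (g : G) (A : Set G), μ ((· * g) '' A) = μ A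
/-- `Many μ k P` says that property `P` of `(k+1)`-tuples holds for many tuples:
`μ({x₀ : μ({x₁ : … μ({x_k : P(x₀,…,x_k)}) > 0 …}) > 0}) > 0`. -/
def Many {G : Type*} (μ : Set G → ℝ) : (k : ℕ) → ((Fin (k + 1) → G) → Prop) → Prop
  | 0, P => 0 < μ {x | P ![x]}
  | k + 1, P => 0 < μ {x₀ | Many μ k fun x => P (Fin.cons x₀ x)}
/-- `FPdec x` is the set of all products `x_{i_1} ⋯ x_{i_m}` over nonempty sets of
indices `{i_1 > i_2 > … > i_m}`, i.e. the factors are multiplied in decreasing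
order of index (this is `FP(x_k, …, x_0)`). -/
def FPdec {G : Type*} [Group G] {k : ℕ} (x : Fin (k + 1) → G) : Set G :=
  {g | ∃ F : Finset (Fin (k + 1)), F.Nonempty ∧ g = ((F.sort (· ≤ ·)).reverse.map x).prod}

/-- A set `A` is a large `←IP₀` set if for every `k` there are many tuples
`(x₀, …, x_k)` with `FP(x_k, …, x₀) ⊆ A`. -/
def LargeIP0 {G : Type*} [Group G] (μ : Set G → ℝ) (A : Set G) : Prop :=
  ∀ k : ℕ, Many μ k fun x => FPdec x ⊆ A


section Meas
variable {G : Type*} [Group G] {μ : Set G → ℝ} (hμ : IsInvFAPM μ)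
include hμ

theorem mu_empty : μ (∅ : Set G) = 0 := by
  have := hμ.additive ∅ ∅ (disjoint_bot_left)
  simp at this; linarith

theorem mu_mono {A B : Set G} (h : A ⊆ B) : μ A ≤ μ B := by
  have hd : Disjoint A (B \ A) := Set.disjoint_sdiff_right.mono_left le_rfl
  have : μ (A ∪ (B \ A)) = μ A + μ (B \ A) := hμ.additive _ _ hd
  rw [Set.union_diff_cancel h] at this
  have := hμ.nonneg (B \ A); linarith

theorem mu_pos_nonempty {A : Set G} (h : 0 < μ A) : A.Nonempty := by
  rcases A.eq_empty_or_nonempty with rfl | hne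
  · rw [mu_empty hμ] at h; exact absurd h (lt_irrefl 0)
  · exact hne

theorem mu_union_le (A B : Set G) : μ (A ∪ B) ≤ μ A + μ B := by
  have hd : Disjoint A (B \ A) := Set.disjoint_sdiff_right.mono_left le_rfl
  have h1 : μ (A ∪ B) = μ A + μ (B \ A) := by
    rw [show A ∪ B = A ∪ (B \ A) by rw [Set.union_diff_self]]
    exact hμ.additive _ _ hd
  have h2 : μ (B \ A) ≤ μ B := mu_mono hμ Set.diff_subset
  linarith

/-- right translation invariance in comprehension form -/
theorem mu_comp_right (g : G) (φ : G → Prop) : μ {x | φ (x * g)} = μ {x | φ x} := by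
  have : {x | φ (x * g)} = (· * g⁻¹) '' {x | φ x} := by
    ext z; constructor
    · intro hz; exact ⟨z * g, hz, by group⟩
    · rintro ⟨w, hw, rfl⟩; simpa [mul_assoc] using hw
  rw [this, hμ.right_invariant]

theorem mu_pos_of_union {ι : Type*} (s : Finset ι) (T : ι → Set G) {S : Set G}
    (hsub : S ⊆ ⋃ i ∈ s, T i) (hS : 0 < μ S) : ∃ i ∈ s, 0 < μ (T i) := by
  classical
  induction s using Finset.induction generalizing S with
  | empty => simp at hsub; subst hsub; rw [mu_empty hμ] at hS; exact absurd hS (lt_irrefl 0)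
  | insert _ _ hx ih =>
    rename_i a s
    by_cases h : 0 < μ (T a)
    · exact ⟨a, Finset.mem_insert_self _ _, h⟩
    · have hTa : μ (T a) = 0 := le_antisymm (not_lt.mp h) (hμ.nonneg _)
      have hsub2 : S \ T a ⊆ ⋃ i ∈ s, T i := by
        intro z hz
        have := hsub hz.1
        simp only [Set.mem_iUnion, Finset.mem_insert] at this ⊢
        rcases this with ⟨i, hi, hzi⟩
        rcases hi with rfl | hi
        · exact absurd hzi hz.2
        · exact ⟨i, hi, hzi⟩
      have hpos : 0 < μ (S \ T a) := by
        have hle : μ S ≤ μ (T a) + μ (S \ T a) := by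
          calc μ S ≤ μ (T a ∪ (S \ T a)) := mu_mono hμ (fun z hz => by
                by_cases hzT : z ∈ T a
                · exact Or.inl hzT
                · exact Or.inr ⟨hz, hzT⟩)
            _ ≤ μ (T a) + μ (S \ T a) := mu_union_le hμ _ _
        linarith
      obtain ⟨i, hi, hpi⟩ := ih hsub2 hpos
      exact ⟨i, Finset.mem_insert_of_mem hi, hpi⟩

end Meas

section ManyLemmas
variable {G : Type*} [Group G] {μ : Set G → ℝ} (hμ : IsInvFAPM μ)
include hμ

theorem many_mono : ∀ (k : ℕ) {P Q : (Fin (k + 1) → G) → Prop},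
    (∀ x, P x → Q x) → Many μ k P → Many μ k Q := by
  intro k
  induction k with
  | zero => intro P Q h hP
            exact lt_of_lt_of_le hP (mu_mono hμ (fun x hx => h _ hx))
  | succ k ih => intro P Q h hP
                 exact lt_of_lt_of_le hP (mu_mono hμ (fun x₀ hx₀ => ih (fun x => h _) hx₀))

theorem many_exists : ∀ (k : ℕ) {P : (Fin (k + 1) → G) → Prop},
    Many μ k P → ∃ x, P x := by
  intro k
  induction k with
  | zero => intro P hP
            obtain ⟨x, hx⟩ := mu_pos_nonempty hμ hP
            exact ⟨![x], hx⟩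
  | succ k ih => intro P hP
                 obtain ⟨x₀, hx₀⟩ := mu_pos_nonempty hμ hP
                 obtain ⟨x, hx⟩ := ih hx₀
                 exact ⟨Fin.cons x₀ x, hx⟩

theorem many_const (k : ℕ) {c : Prop} (hc : c) : Many μ k (fun _ : Fin (k+1) → G => c) := by
  induction k with
  | zero => rw [show Many μ 0 (fun _ : Fin (0+1) → G => c) = (0 < μ {x : G | c}) from rfl, show {x : G | c} = Set.univ from Set.eq_univ_of_forall fun _ => hc, hμ.total]
            norm_num
  | succ k ih =>
      show 0 < μ {x₀ : G | Many μ k fun _ : Fin (k+1) → G => c}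
      have : {x₀ : G | Many μ k fun _ : Fin (k+1) → G => c} = Set.univ :=
        Set.eq_univ_of_forall fun _ => ih
      rw [this, hμ.total]; norm_num

theorem many_const_iff (k : ℕ) {c : Prop} : Many μ k (fun _ : Fin (k+1) → G => c) ↔ c :=
  ⟨fun h => (many_exists hμ k h).choose_spec, fun hc => many_const hμ k hc⟩

theorem many_choice {ι : Type*} [Fintype ι] : ∀ (k : ℕ) (P : ι → (Fin (k + 1) → G) → Prop),
    Many μ k (fun x => ∃ i, P i x) → ∃ i, Many μ k (P i) := by
  intro k
  induction k with
  | zero =>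
    intro P h
    have hsub : {x : G | ∃ i, P i ![x]} ⊆ ⋃ i ∈ (Finset.univ : Finset ι), {x | P i ![x]} := by
      intro x ⟨i, hi⟩; simp only [Set.mem_iUnion]; exact ⟨i, Finset.mem_univ i, hi⟩
    obtain ⟨i, _, hi⟩ := mu_pos_of_union hμ _ _ hsub h
    exact ⟨i, hi⟩
  | succ k ih =>
    intro P h
    have hsub : {x₀ : G | Many μ k fun x => ∃ i, P i (Fin.cons x₀ x)} ⊆
        ⋃ i ∈ (Finset.univ : Finset ι), {x₀ | Many μ k fun x => P i (Fin.cons x₀ x)} := by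
      intro x₀ hx₀
      obtain ⟨i, hi⟩ := ih (fun i x => P i (Fin.cons x₀ x)) hx₀
      simp only [Set.mem_iUnion]; exact ⟨i, Finset.mem_univ i, hi⟩
    obtain ⟨i, _, hi⟩ := mu_pos_of_union hμ _ _ hsub h
    exact ⟨i, hi⟩

/-- Right-translating coordinate 0 preserves `Many`. -/
theorem many_update0 (k : ℕ) (Q : (Fin (k + 1) → G) → Prop) (g : G) :
    Many μ k (fun y => Q (Function.update y 0 (y 0 * g))) → Many μ k Q := by
  cases k with
  | zero =>
    intro h
    have h' : 0 < μ {x : G | Q ![x * g]} := by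
      refine lt_of_lt_of_le h (le_of_eq ?_)
      congr 1; ext x
      show Q (Function.update ![x] 0 ((![x] : Fin 1 → G) 0 * g)) ↔ Q ![x * g]
      have : Function.update ![x] 0 ((![x] : Fin 1 → G) 0 * g) = ![x * g] := by
        funext j; fin_cases j <;> simp
      rw [this]
    show 0 < μ {x : G | Q ![x]}
    rw [← mu_comp_right hμ g (fun z => Q ![z])]
    exact h'
  | succ k =>
    intro h
    have h' : 0 < μ {y₀ : G | Many μ k fun x => Q (Function.update (Fin.cons y₀ x) 0 (y₀ * g))} := h
    have he : {y₀ : G | Many μ k fun x => Q (Function.update (Fin.cons y₀ x) 0 (y₀ * g))}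
        = {y₀ : G | Many μ k fun x => Q (Fin.cons (y₀ * g) x)} := by
      ext y₀
      have hkey : ∀ x : Fin (k+1) → G,
          Function.update (Fin.cons y₀ x) 0 (y₀ * g) = (Fin.cons (y₀ * g) x : Fin (k + 1 + 1) → G) := by
        intro x; funext j
        refine Fin.cases ?_ ?_ j
        · simp
        · intro i; rw [Function.update_of_ne (Fin.succ_ne_zero i), Fin.cons_succ, Fin.cons_succ]
      simp only [Set.mem_setOf_eq]
      constructor <;> intro hh
      · refine many_mono hμ k (fun x hx => ?_) hh; rw [hkey x] at hx; exact hx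
      · refine many_mono hμ k (fun x hx => ?_) hh; rw [hkey x]; exact hx
    rw [he] at h'
    show 0 < μ {y₀ : G | Many μ k fun x => Q (Fin.cons y₀ x)}
    rw [← mu_comp_right hμ g (fun z => Many μ k fun x => Q (Fin.cons z x))]
    exact h'

end ManyLemmas

section SortLemmas
variable {α : Type*} [LinearOrder α] [DecidableEq α]

theorem eq_of_perm_of_sorted' {β : Type*} [LinearOrder β] {l₁ l₂ : List β} (hp : l₁.Perm l₂)
    (h1 : l₁.Pairwise (· ≤ ·)) (h2 : l₂.Pairwise (· ≤ ·)) : l₁ = l₂ :=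
  hp.eq_of_pairwise' h1 h2

theorem sort_union_of_sep (F F' : Finset α) (h : ∀ a ∈ F, ∀ b ∈ F', a < b) :
    (F ∪ F').sort (· ≤ ·) = F.sort (· ≤ ·) ++ F'.sort (· ≤ ·) := by
  have hdisj : Disjoint F F' := by
    rw [Finset.disjoint_left]
    intro a haF haF'
    exact absurd (h a haF a haF') (lt_irrefl a)
  apply eq_of_perm_of_sorted'
  · rw [← Multiset.coe_eq_coe]
    have h1 : ((F ∪ F').sort (· ≤ ·) : Multiset α) = (F ∪ F').val := Finset.sort_eq _ _
    have h2 : ((F.sort (· ≤ ·) ++ F'.sort (· ≤ ·) : List α) : Multiset α)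
        = F.val + F'.val := by
      push_cast [← Multiset.coe_add]
      rw [Finset.sort_eq, Finset.sort_eq]
    rw [h1, h2, ← Finset.disjUnion_eq_union F F' hdisj]
    rfl
  · exact Finset.pairwise_sort _ _
  · rw [List.pairwise_append]
    refine ⟨Finset.pairwise_sort _ _, Finset.pairwise_sort _ _, ?_⟩
    intro a ha b hb
    exact le_of_lt (h a (by simpa using (Finset.mem_sort _).mp ha) b
      (by simpa using (Finset.mem_sort _).mp hb))

theorem sort_cons_of_min {F : Finset α} {a : α} (haF : a ∈ F) (hmin : ∀ b ∈ F, a ≤ b) :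
    F.sort (· ≤ ·) = a :: (F.erase a).sort (· ≤ ·) := by
  apply eq_of_perm_of_sorted'
  · rw [← Multiset.coe_eq_coe]
    have h1 : (F.sort (· ≤ ·) : Multiset α) = F.val := Finset.sort_eq _ _
    have h2 : ((a :: (F.erase a).sort (· ≤ ·) : List α) : Multiset α)
        = a ::ₘ (F.erase a).val := by
      rw [← Multiset.cons_coe, Finset.sort_eq]
    rw [h1, h2, Finset.erase_val, Multiset.cons_erase (by exact haF)]
  · exact Finset.pairwise_sort _ _
  · rw [List.pairwise_cons]
    refine ⟨fun b hb => hmin b (Finset.mem_of_mem_erase ((Finset.mem_sort _).mp hb)),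
      Finset.pairwise_sort _ _⟩

theorem sort_map_of_orderEmb {β : Type*} [LinearOrder β] [DecidableEq β] (f : α ↪o β) (F : Finset α) :
    (F.map f.toEmbedding).sort (· ≤ ·) = (F.sort (· ≤ ·)).map f := by
  apply eq_of_perm_of_sorted'
  · rw [← Multiset.coe_eq_coe]
    have h1 : ((F.map f.toEmbedding).sort (· ≤ ·) : Multiset β) = (F.map f.toEmbedding).val :=
      Finset.sort_eq _ _
    have h2 : (((F.sort (· ≤ ·)).map f : List β) : Multiset β)
        = (F.val).map f := by
      rw [← Multiset.map_coe, Finset.sort_eq]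
    rw [h1, h2]; rfl
  · exact Finset.pairwise_sort _ _
  · exact List.Pairwise.map f (fun a b hab => f.monotone hab) (Finset.pairwise_sort _ _)

end SortLemmas

section Dprod
variable {G : Type*} [Group G]

def dprod {n : ℕ} (x : Fin n → G) (F : Finset (Fin n)) : G :=
  ((F.sort (· ≤ ·)).reverse.map x).prod

theorem dprod_singleton {n : ℕ} (x : Fin n → G) (j : Fin n) : dprod x {j} = x j := by
  simp [dprod]

theorem dprod_union_of_sep {n : ℕ} (x : Fin n → G) (F F' : Finset (Fin n))
    (h : ∀ a ∈ F, ∀ b ∈ F', a < b) :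
    dprod x (F ∪ F') = dprod x F' * dprod x F := by
  unfold dprod
  rw [sort_union_of_sep F F' h, List.reverse_append, List.map_append, List.prod_append]

def succOE (n : ℕ) : Fin n ↪o Fin (n + 1) :=
  OrderEmbedding.ofStrictMono Fin.succ (fun a b h => Fin.succ_lt_succ_iff.mpr h)

noncomputable def shiftF {n : ℕ} (F : Finset (Fin (n + 1))) : Finset (Fin n) :=
  F.preimage Fin.succ (Fin.succ_injective n).injOn

theorem mem_shiftF {n : ℕ} {F : Finset (Fin (n + 1))} {u : Fin n} :
    u ∈ shiftF F ↔ u.succ ∈ F := Finset.mem_preimage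

theorem shiftF_map {n : ℕ} {F : Finset (Fin (n + 1))} (h0 : (0 : Fin (n+1)) ∉ F) :
    (shiftF F).map (succOE n).toEmbedding = F := by
  ext a
  simp only [Finset.mem_map, mem_shiftF]
  constructor
  · rintro ⟨u, hu, rfl⟩; exact hu
  · intro ha
    have hne : a ≠ 0 := fun h => h0 (h ▸ ha)
    obtain ⟨u, rfl⟩ := Fin.eq_succ_of_ne_zero hne
    exact ⟨u, ha, rfl⟩

theorem dprod_cons_notmem {n : ℕ} (x₀ : G) (x : Fin n → G) (F : Finset (Fin (n + 1)))
    (h0 : (0 : Fin (n+1)) ∉ F) :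
    dprod (Fin.cons x₀ x) F = dprod x (shiftF F) := by
  conv_lhs => rw [← shiftF_map h0]
  unfold dprod
  rw [sort_map_of_orderEmb, List.map_reverse, List.map_reverse, List.map_map]
  congr 2
  try (funext u; simp [succOE])

theorem dprod_cons_mem {n : ℕ} (x₀ : G) (x : Fin n → G) (F : Finset (Fin (n + 1)))
    (h0 : (0 : Fin (n+1)) ∈ F) :
    dprod (Fin.cons x₀ x) F = dprod x (shiftF (F.erase 0)) * x₀ := by
  have hs : F.sort (· ≤ ·) = (0 : Fin (n+1)) :: (F.erase 0).sort (· ≤ ·) :=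
    sort_cons_of_min h0 (fun b _ => Fin.zero_le b)
  rw [← dprod_cons_notmem x₀ x _ (Finset.notMem_erase _ _)]
  unfold dprod
  rw [hs, List.reverse_cons, List.map_append, List.prod_append]
  simp

theorem dprod_biUnion {n k : ℕ} (x : Fin n → G) (B : Fin (k + 1) → Finset (Fin n))
    (hsep : ∀ j j' : Fin (k + 1), j < j' → ∀ a ∈ B j, ∀ b ∈ B j', a < b) :
    ∀ S : Finset (Fin (k + 1)), dprod x (S.biUnion B) = dprod (fun j => dprod x (B j)) S := by
  intro S
  induction S using Finset.strongInduction with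
  | _ S ih =>
    rcases S.eq_empty_or_nonempty with rfl | hS
    · simp [dprod]
    · set j0 := S.min' hS with hj0
      have hj0S : j0 ∈ S := S.min'_mem hS
      set S' := S.erase j0 with hS'
      have hSeq : S = insert j0 S' := by
        rw [hS', Finset.insert_erase hj0S]
      have hlt : ∀ j ∈ S', j0 < j := fun j hj =>
        lt_of_le_of_ne (S.min'_le j (Finset.mem_of_mem_erase hj))
          (Ne.symm (Finset.ne_of_mem_erase hj))
      have hbi : S.biUnion B = B j0 ∪ S'.biUnion B := by
        rw [hSeq, Finset.biUnion_insert]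
      have hsep2 : ∀ a ∈ B j0, ∀ b ∈ S'.biUnion B, a < b := by
        intro a ha b hb
        rw [Finset.mem_biUnion] at hb
        obtain ⟨j, hj, hbj⟩ := hb
        exact hsep j0 j (hlt j hj) a ha b hbj
      have h1 : dprod x (S.biUnion B) = dprod x (S'.biUnion B) * dprod x (B j0) := by
        rw [hbi]; exact dprod_union_of_sep x _ _ hsep2
      have h2 : dprod (fun j => dprod x (B j)) S
          = dprod (fun j => dprod x (B j)) S' * dprod x (B j0) := by
        have : S = {j0} ∪ S' := by rw [hSeq]; exact Finset.insert_eq j0 S'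
        rw [this, dprod_union_of_sep _ _ _ (by
          intro a ha b hb
          rw [Finset.mem_singleton] at ha
          subst ha
          exact hlt b hb), dprod_singleton]
      rw [h1, h2, ih S' (by rw [hS']; exact Finset.erase_ssubset hj0S)]
end Dprod

section Subst
variable {G : Type*} [Group G] {μ : Set G → ℝ} (hμ : IsInvFAPM μ)
include hμ

theorem many_subst : ∀ (K : ℕ) (k : ℕ) (B : Fin (k + 1) → Finset (Fin (K + 1))),
    (∀ j, (B j).Nonempty) →
    (∀ j j' : Fin (k + 1), j < j' → ∀ a ∈ B j, ∀ b ∈ B j', a < b) →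
    ∀ (Q : (Fin (k + 1) → G) → Prop),
    Many μ K (fun x => Q fun j => dprod x (B j)) → Many μ k Q := by
  intro K
  induction K with
  | zero =>
    intro k B hne hsep Q h
    -- every block is {0}, so k = 0
    have hB : ∀ j, B j = {0} := by
      intro j
      obtain ⟨a, ha⟩ := hne j
      have ha0 : a = 0 := Fin.fin_one_eq_zero a
      subst ha0
      apply Finset.eq_singleton_iff_unique_mem.mpr
      exact ⟨ha, fun b hb => Fin.fin_one_eq_zero b⟩
    have hk : k = 0 := by
      by_contra hk0
      have h1 : (0 : Fin (k+1)) < Fin.last k := by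
        rw [Fin.lt_iff_val_lt_val]
        simpa [Fin.last] using Nat.pos_of_ne_zero hk0
      have := hsep 0 (Fin.last k) h1 0 (by rw [hB]; simp) 0 (by rw [hB]; simp)
      exact absurd this (lt_irrefl _)
    subst hk
    have h' : Many μ 0 (fun x : Fin 1 → G => Q ![x 0]) := by
      refine many_mono hμ 0 (fun x hx => ?_) h
      have : (fun j : Fin 1 => dprod x (B j)) = ![x 0] := by
        funext j
        have hj : j = 0 := Fin.fin_one_eq_zero j
        subst hj
        rw [hB, dprod_singleton]
        rfl
      rwa [this] at hx
    refine many_mono hμ 0 (fun x hx => ?_) h'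
    have : (![x 0] : Fin 1 → G) = x := by
      funext j
      have hj : j = 0 := Fin.fin_one_eq_zero j
      subst hj; rfl
    rwa [this] at hx
  | succ K ih =>
    intro k B hne hsep Q h
    have h' : 0 < μ {x₀ : G | Many μ K fun x =>
        Q fun j => dprod (Fin.cons x₀ x) (B j)} := h
    have h0notj : ∀ j : Fin (k+1), j ≠ 0 → (0 : Fin (K+2)) ∉ B j := by
      intro j hj h0
      obtain ⟨a, ha⟩ := hne 0
      have := hsep 0 j (Fin.pos_iff_ne_zero.mpr hj) a ha 0 h0
      exact absurd this (Fin.not_lt_zero a)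
    by_cases hc : (0 : Fin (K+2)) ∈ B 0
    · by_cases hs : B 0 = {0}
      · -- case: B 0 = {0}
        cases k with
        | zero =>
          -- single block {0} : dprod (cons x₀ x) (B 0) = x₀
          have hset : {x₀ : G | Many μ K fun x =>
              Q fun j => dprod (Fin.cons x₀ x) (B j)} = {x₀ : G | Q ![x₀]} := by
            ext x₀
            simp only [Set.mem_setOf_eq]
            have key : ∀ x : Fin (K+1) → G,
                (fun j : Fin 1 => dprod (Fin.cons x₀ x) (B j)) = ![x₀] := by
              intro x; funext j
              have hj : j = 0 := Fin.fin_one_eq_zero j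
              subst hj
              rw [hs, dprod_singleton]
              rfl
            constructor
            · intro hh
              obtain ⟨x, hx⟩ := many_exists hμ K hh
              rwa [key x] at hx
            · intro hh
              exact many_mono hμ K (fun x _ => by rw [key x]; exact hh)
                (many_const hμ K trivial)
          rw [hset] at h'
          exact h'
        | succ k' =>
          -- blocks 1..k' shift down
          have hsub : {x₀ : G | Many μ K fun x =>
              Q fun j => dprod (Fin.cons x₀ x) (B j)} ⊆
              {x₀ : G | Many μ k' fun y => Q (Fin.cons x₀ y)} := by
            intro x₀ hx₀
            simp only [Set.mem_setOf_eq] at hx₀ ⊢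
            set B' : Fin (k' + 1) → Finset (Fin (K + 1)) :=
              fun j' => shiftF (B j'.succ) with hB'
            have hne' : ∀ j', (B' j').Nonempty := by
              intro j'
              obtain ⟨a, ha⟩ := hne j'.succ
              have ha0 : a ≠ 0 := fun hh => h0notj j'.succ (Fin.succ_ne_zero j') (hh ▸ ha)
              obtain ⟨u, rfl⟩ := Fin.eq_succ_of_ne_zero ha0
              exact ⟨u, mem_shiftF.mpr ha⟩
            have hsep' : ∀ j j' : Fin (k' + 1), j < j' → ∀ a ∈ B' j, ∀ b ∈ B' j', a < b := by
              intro j j' hjj a ha b hb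
              rw [hB'] at ha hb
              rw [mem_shiftF] at ha hb
              have := hsep j.succ j'.succ (Fin.succ_lt_succ_iff.mpr hjj) a.succ ha b.succ hb
              exact Fin.succ_lt_succ_iff.mp this
            refine ih k' B' hne' hsep' (fun y => Q (Fin.cons x₀ y)) ?_
            refine many_mono hμ K (fun x hx => ?_) hx₀
            have key : (fun j : Fin (k'+2) => dprod (Fin.cons x₀ x) (B j))
                = Fin.cons x₀ (fun j' => dprod x (B' j')) := by
              funext j
              refine Fin.cases ?_ ?_ j
              · rw [Fin.cons_zero, hs, dprod_singleton]; rfl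
              · intro j'
                rw [Fin.cons_succ, hB']
                exact dprod_cons_notmem x₀ x _ (h0notj j'.succ (Fin.succ_ne_zero j'))
            rwa [key] at hx
          exact lt_of_lt_of_le h' (mu_mono hμ hsub)
      · -- case: 0 ∈ B 0, B 0 ≠ {0}
        obtain ⟨x₀, hx₀⟩ := mu_pos_nonempty hμ h'
        simp only [Set.mem_setOf_eq] at hx₀
        set B' : Fin (k + 1) → Finset (Fin (K + 1)) :=
          Function.update (fun j => shiftF (B j)) 0 (shiftF ((B 0).erase 0)) with hB'
        have hB'0 : B' 0 = shiftF ((B 0).erase 0) := by rw [hB']; simp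
        have hB'j : ∀ j : Fin (k+1), j ≠ 0 → B' j = shiftF (B j) := by
          intro j hj; rw [hB', Function.update_of_ne hj]
        have hkey : ∀ j : Fin (k+1), ∀ u : Fin (K+1), u ∈ B' j ↔
            (u.succ ∈ B j ∧ (j = 0 → u.succ ≠ 0)) := by
          intro j u
          by_cases hj : j = 0
          · subst hj
            rw [hB'0, mem_shiftF, Finset.mem_erase]
            simp [and_comm]
          · rw [hB'j j hj, mem_shiftF]
            simp [hj]
        have hne' : ∀ j, (B' j).Nonempty := by
          intro j
          by_cases hj : j = 0
          · subst hj
            have hex : ∃ a ∈ B 0, a ≠ 0 := by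
              by_contra hcon
              push_neg at hcon
              exact hs (Finset.eq_singleton_iff_unique_mem.mpr ⟨hc, hcon⟩)
            obtain ⟨a, ha, ha0⟩ := hex
            obtain ⟨u, rfl⟩ := Fin.eq_succ_of_ne_zero ha0
            exact ⟨u, (hkey 0 u).mpr ⟨ha, fun _ => Fin.succ_ne_zero u⟩⟩
          · obtain ⟨a, ha⟩ := hne j
            have ha0 : a ≠ 0 := fun hh => h0notj j hj (hh ▸ ha)
            obtain ⟨u, rfl⟩ := Fin.eq_succ_of_ne_zero ha0
            exact ⟨u, (hkey j u).mpr ⟨ha, fun hj0 => absurd hj0 hj⟩⟩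
        have hsep' : ∀ j j' : Fin (k + 1), j < j' → ∀ a ∈ B' j, ∀ b ∈ B' j', a < b := by
          intro j j' hjj a ha b hb
          have ha' := ((hkey j a).mp ha).1
          have hb' := ((hkey j' b).mp hb).1
          exact Fin.succ_lt_succ_iff.mp (hsep j j' hjj a.succ ha' b.succ hb')
        have key : ∀ x : Fin (K+1) → G, (fun j => dprod (Fin.cons x₀ x) (B j))
            = Function.update (fun j => dprod x (B' j)) 0 (dprod x (B' 0) * x₀) := by
          intro x; funext j
          by_cases hj : j = 0
          · subst hj
            rw [Function.update_self, hB'0, ← dprod_cons_mem x₀ x _ hc]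
          · rw [Function.update_of_ne hj, hB'j j hj,
              ← dprod_cons_notmem x₀ x _ (h0notj j hj)]
        have hmany' : Many μ k (fun y => Q (Function.update y 0 (y 0 * x₀))) := by
          refine ih k B' hne' hsep' (fun y => Q (Function.update y 0 (y 0 * x₀))) ?_
          refine many_mono hμ K (fun x hx => ?_) hx₀
          show Q (Function.update (fun j => dprod x (B' j)) 0 (dprod x (B' 0) * x₀))
          rw [← key x]
          exact hx
        exact many_update0 hμ k Q x₀ hmany'
    · -- case: 0 in no block
      obtain ⟨x₀, hx₀⟩ := mu_pos_nonempty hμ h'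
      simp only [Set.mem_setOf_eq] at hx₀
      set B' : Fin (k + 1) → Finset (Fin (K + 1)) := fun j => shiftF (B j) with hB'
      have h0all : ∀ j : Fin (k+1), (0 : Fin (K+2)) ∉ B j := by
        intro j
        by_cases hj : j = 0
        · subst hj; exact hc
        · exact h0notj j hj
      have hne' : ∀ j, (B' j).Nonempty := by
        intro j
        obtain ⟨a, ha⟩ := hne j
        have ha0 : a ≠ 0 := fun hh => h0all j (hh ▸ ha)
        obtain ⟨u, rfl⟩ := Fin.eq_succ_of_ne_zero ha0
        exact ⟨u, mem_shiftF.mpr ha⟩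
      have hsep' : ∀ j j' : Fin (k + 1), j < j' → ∀ a ∈ B' j, ∀ b ∈ B' j', a < b := by
        intro j j' hjj a ha b hb
        rw [hB'] at ha hb
        rw [mem_shiftF] at ha hb
        exact Fin.succ_lt_succ_iff.mp (hsep j j' hjj a.succ ha b.succ hb)
      refine ih k B' hne' hsep' Q ?_
      refine many_mono hμ K (fun x hx => ?_) hx₀
      have key : (fun j => dprod (Fin.cons x₀ x) (B j)) = fun j => dprod x (B' j) := by
        funext j
        exact dprod_cons_notmem x₀ x _ (h0all j)
      rwa [key] at hx

end Subst

open Hindman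

attribute [local instance] Ultrafilter.mul Ultrafilter.semigroup

section Galvin
variable {M : Type*} [Semigroup M]

theorem exists_idem_drop (a : Stream' M) :
    ∃ U : Ultrafilter M, U * U = U ∧ ∀ n : ℕ, ∀ᶠ m in U, m ∈ FP (a.drop n) := by
  let S : Set (Ultrafilter M) := ⋂ n, { U | ∀ᶠ m in U, m ∈ FP (a.drop n) }
  have h := exists_idempotent_in_compact_subsemigroup ?_ S ?_ ?_ ?_
  · rcases h with ⟨U, hU, U_idem⟩
    exact ⟨U, U_idem, fun n => Set.mem_iInter.mp hU n⟩
  · exact Ultrafilter.continuous_mul_left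
  · apply IsCompact.nonempty_iInter_of_sequence_nonempty_isCompact_isClosed
    · intro n U hU
      filter_upwards [hU]
      rw [← Stream'.drop_drop, ← Stream'.tail_eq_drop]
      exact FP.tail _
    · intro n
      exact ⟨pure _, Filter.mem_pure.mpr <| FP.head _⟩
    · exact (ultrafilter_isClosed_basic _).isCompact
    · intro n
      apply ultrafilter_isClosed_basic
  · exact IsClosed.isCompact (isClosed_iInter fun i => ultrafilter_isClosed_basic _)
  · intro U hU V hV
    rw [Set.mem_iInter] at *
    intro n
    rw [Set.mem_setOf_eq, Ultrafilter.eventually_mul]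
    filter_upwards [hU n] with m hm
    obtain ⟨n', hn⟩ := FP.mul hm
    filter_upwards [hV (n' + n)] with m' hm'
    apply hn
    simpa only [Stream'.drop_drop, add_comm] using hm'

theorem FP_closed (S : Set M) (hS : ∀ u ∈ S, ∀ v ∈ S, u * v ∈ S) :
    ∀ (b : Stream' M) (m : M), m ∈ FP b → (∀ i, b.get i ∈ S) → m ∈ S := by
  intro b m hm
  induction hm with
  | head' a => intro h; exact h 0
  | tail' a m h ih => intro hb; exact ih (fun i => hb (i + 1))
  | cons' a m h ih => intro hb; exact hS _ (hb 0) _ (ih (fun i => hb (i + 1)))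

variable (U : Ultrafilter M)

def ustar (s : Set M) : Set M := {m | {m' | m * m' ∈ s} ∈ U}

theorem ustar_mem (hU : U * U = U) {s : Set M} (hs : s ∈ U) : ustar U s ∈ U := by
  have h1 : ∀ᶠ m in ((U * U : Ultrafilter M) : Filter M), m ∈ s := by
    rw [hU]; exact hs
  rw [Ultrafilter.eventually_mul] at h1
  exact h1

theorem galvin_step (hU : U * U = U) {s : Set M} {m : M} (hm : m ∈ ustar U s)
    (hsU : {m' | m * m' ∈ s} ∈ U) :
    {m' | m * m' ∈ s ∩ ustar U s} ∈ U := by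
  have h2 : {m' | m * m' ∈ ustar U s} = ustar U {m' | m * m' ∈ s} := by
    ext m'
    simp only [ustar, Set.mem_setOf_eq, mul_assoc]
  have h3 : ustar U {m' | m * m' ∈ s} ∈ U := ustar_mem U hU hsU
  have h4 : {m' | m * m' ∈ s ∩ ustar U s}
      = {m' | m * m' ∈ s} ∩ {m' | m * m' ∈ ustar U s} := rfl
  rw [h4, h2]
  exact Filter.inter_mem hsU h3

end Galvin

section FUsect

instance FUMul : Mul (Finset ℕ) := ⟨(· ∪ ·)⟩
instance FUSemigroup : Semigroup (Finset ℕ) := ⟨fun a b c => Finset.union_assoc a b c⟩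

theorem FUmul_def (a b : Finset ℕ) : a * b = a ∪ b := rfl

def baseStream : Stream' (Finset ℕ) := fun n => {n}

theorem mem_FP_drop {n : ℕ} {m : Finset ℕ} (hm : m ∈ FP (baseStream.drop n)) :
    m.Nonempty ∧ ∀ x ∈ m, n ≤ x := by
  refine FP_closed {F : Finset ℕ | F.Nonempty ∧ ∀ x ∈ F, n ≤ x} ?_ _ _ hm ?_
  · rintro u ⟨hu1, hu2⟩ v ⟨hv1, hv2⟩
    refine ⟨?_, ?_⟩
    · rw [FUmul_def]; exact hu1.mono Finset.subset_union_left
    · intro x hx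
      rw [FUmul_def, Finset.mem_union] at hx
      rcases hx with hx | hx
      · exact hu2 x hx
      · exact hv2 x hx
  · intro i
    have : (baseStream.drop n).get i = ({i + n} : Finset ℕ) := rfl
    rw [this]
    exact ⟨Finset.singleton_nonempty _, fun x hx => by
      rw [Finset.mem_singleton] at hx; omega⟩

/-- The infinite ordered finite-unions theorem. -/
theorem infinite_FU (r : ℕ) (c : Finset ℕ → Fin r) (k : ℕ) :
    ∃ B : Fin (k + 1) → Finset ℕ, (∀ j, (B j).Nonempty) ∧
      (∀ j j' : Fin (k + 1), j < j' → ∀ a ∈ B j, ∀ b ∈ B j', a < b) ∧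
      ∃ i, ∀ S : Finset (Fin (k + 1)), S.Nonempty → c (S.biUnion B) = i := by
  classical
  obtain ⟨U, hUidem, hdrop⟩ := exists_idem_drop baseStream
  -- find a color class in U
  have hcov : (Set.univ : Set (Finset ℕ)) = ⋃ i ∈ (Set.univ : Set (Fin r)), {F | c F = i} := by
    ext F; simp
  have hex : ∃ i ∈ (Set.univ : Set (Fin r)), {F | c F = i} ∈ U := by
    rw [← Ultrafilter.finite_biUnion_mem_iff (Set.finite_univ)]
    rw [← hcov]
    exact Filter.univ_mem
  obtain ⟨i, -, hi⟩ := hex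
  set s₀ : Set (Finset ℕ) := {F | c F = i} with hs₀
  set D : Set (Finset ℕ) := s₀ ∩ ustar U s₀ with hD
  have hDU : D ∈ U := Filter.inter_mem hi (ustar_mem U hUidem hi)
  have hgalvin : ∀ p ∈ D, {m | p * m ∈ D} ∈ U := by
    intro p hp
    exact galvin_step U hUidem hp.2 hp.2
  -- build blocks by induction
  have hbuild : ∀ t : ℕ, ∃ B : Fin (t + 1) → Finset ℕ, (∀ j, (B j).Nonempty) ∧
      (∀ j j' : Fin (t + 1), j < j' → ∀ a ∈ B j, ∀ b ∈ B j', a < b) ∧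
      (∀ S : Finset (Fin (t + 1)), S.Nonempty → S.biUnion B ∈ D) := by
    intro t
    induction t with
    | zero =>
      have hT : D ∩ {m | m ∈ FP (baseStream.drop 0)} ∈ U :=
        Filter.inter_mem hDU (hdrop 0)
      obtain ⟨m, hmD, hmFP⟩ := Ultrafilter.nonempty_of_mem hT
      refine ⟨fun _ => m, fun _ => (mem_FP_drop hmFP).1, ?_, ?_⟩
      · intro j j' hjj
        exfalso
        have h1 := j.isLt
        have h2 := j'.isLt
        have h3 := Fin.lt_iff_val_lt_val.mp hjj
        omega
      · intro S hS
        have : S.biUnion (fun _ => m) = m := by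
          obtain ⟨j, hj⟩ := hS
          apply Finset.Subset.antisymm
          · intro a ha; rw [Finset.mem_biUnion] at ha; obtain ⟨_, _, ha⟩ := ha; exact ha
          · intro a ha; rw [Finset.mem_biUnion]; exact ⟨j, hj, ha⟩
        rw [this]; exact hmD
    | succ t iht =>
      obtain ⟨B, hne, hsep, hun⟩ := iht
      set N : ℕ := ((Finset.univ : Finset (Fin (t + 1))).biUnion B).sup id + 1 with hN
      have hbound : ∀ j, ∀ x ∈ B j, x < N := by
        intro j x hx
        have : x ≤ ((Finset.univ : Finset (Fin (t + 1))).biUnion B).sup id :=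
          Finset.le_sup (f := id) (Finset.mem_biUnion.mpr ⟨j, Finset.mem_univ j, hx⟩)
        omega
      set P : Finset (Finset ℕ) :=
        (Finset.univ.powerset.filter (fun S : Finset (Fin (t+1)) => S.Nonempty)).image
          (fun S => S.biUnion B) with hP
      have hPD : ∀ p ∈ P, p ∈ D := by
        intro p hp
        rw [hP, Finset.mem_image] at hp
        obtain ⟨S, hS, rfl⟩ := hp
        exact hun S (Finset.mem_filter.mp hS).2
      have hT : (D ∩ {m | m ∈ FP (baseStream.drop N)}) ∩ ⋂ p ∈ (P : Set (Finset ℕ)), {m | p * m ∈ D} ∈ U := by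
        refine Filter.inter_mem (Filter.inter_mem hDU (hdrop N)) ?_
        refine (Filter.biInter_mem (P.finite_toSet)).mpr ?_
        intro p hp
        exact hgalvin p (hPD p hp)
      obtain ⟨m, ⟨hmD, hmFP⟩, hmP⟩ := Ultrafilter.nonempty_of_mem hT
      rw [Set.mem_iInter₂] at hmP
      have hmne : m.Nonempty := (mem_FP_drop hmFP).1
      have hmge : ∀ x ∈ m, N ≤ x := (mem_FP_drop hmFP).2
      refine ⟨Fin.snoc B m, ?_, ?_, ?_⟩
      · intro j
        refine Fin.lastCases ?_ ?_ j
        · rw [Fin.snoc_last]; exact hmne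
        · intro j'; rw [Fin.snoc_castSucc]; exact hne j'
      · intro j j' hjj a ha b hb
        revert hjj ha hb
        refine Fin.lastCases ?_ ?_ j'
        · intro hjj ha hb
          rw [Fin.snoc_last] at hb
          revert hjj ha
          refine Fin.lastCases ?_ ?_ j
          · intro hjj _
            exact absurd hjj (lt_irrefl _)
          · intro j₁ hjj ha
            rw [Fin.snoc_castSucc] at ha
            have h1 := hbound j₁ a ha
            have h2 := hmge b hb
            omega
        · intro j₂ hjj ha hb
          rw [Fin.snoc_castSucc] at hb
          revert hjj ha
          refine Fin.lastCases ?_ ?_ j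
          · intro hjj _
            exact absurd hjj (asymm (Fin.castSucc_lt_last j₂))
          · intro j₁ hjj ha
            rw [Fin.snoc_castSucc] at ha
            exact hsep j₁ j₂ (Fin.castSucc_lt_castSucc_iff.mp hjj) a ha b hb
      · intro S hS
        set S' : Finset (Fin (t + 1)) :=
          S.preimage Fin.castSucc (Fin.castSucc_injective _).injOn with hS'def
        have hmemS' : ∀ j₁ : Fin (t + 1), j₁ ∈ S' ↔ j₁.castSucc ∈ S :=
          fun j₁ => Finset.mem_preimage
        have hbiU : S.biUnion (Fin.snoc B m)
            = S'.biUnion B ∪ (if Fin.last (t + 1) ∈ S then m else ∅) := by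
          ext a
          simp only [Finset.mem_biUnion, Finset.mem_union]
          constructor
          · rintro ⟨j, hj, ha⟩
            revert hj ha
            refine Fin.lastCases ?_ ?_ j
            · intro hj ha
              rw [Fin.snoc_last] at ha
              right; rw [if_pos hj]; exact ha
            · intro j₁ hj ha
              rw [Fin.snoc_castSucc] at ha
              left; exact ⟨j₁, (hmemS' j₁).mpr hj, ha⟩
          · rintro (⟨j₁, hj₁, ha⟩ | ha)
            · exact ⟨j₁.castSucc, (hmemS' j₁).mp hj₁, by rw [Fin.snoc_castSucc]; exact ha⟩
            · by_cases hlast : Fin.last (t + 1) ∈ S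
              · rw [if_pos hlast] at ha
                exact ⟨Fin.last (t + 1), hlast, by rw [Fin.snoc_last]; exact ha⟩
              · rw [if_neg hlast] at ha
                exact absurd ha (Finset.notMem_empty a)
        by_cases hlast : Fin.last (t + 1) ∈ S
        · by_cases hS'ne : S'.Nonempty
          · have hp : S'.biUnion B ∈ P := by
              rw [hP, Finset.mem_image]
              exact ⟨S', Finset.mem_filter.mpr
                ⟨Finset.mem_powerset.mpr (Finset.subset_univ _), hS'ne⟩, rfl⟩
            have hin := hmP _ hp
            rw [hbiU, if_pos hlast]
            exact hin
          · have hS'e : S'.biUnion B = ∅ := by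
              rw [Finset.not_nonempty_iff_eq_empty] at hS'ne
              rw [hS'ne, Finset.biUnion_empty]
            rw [hbiU, if_pos hlast, hS'e, Finset.empty_union]
            exact hmD
        · have hS'ne : S'.Nonempty := by
            obtain ⟨j, hj⟩ := hS
            have hjne : j ≠ Fin.last (t + 1) := fun h => hlast (h ▸ hj)
            obtain ⟨j₁, rfl⟩ := Fin.exists_castSucc_eq.mpr hjne
            exact ⟨j₁, (hmemS' j₁).mpr hj⟩
          rw [hbiU, if_neg hlast, Finset.union_empty]
          exact hun S' hS'ne
  obtain ⟨B, h1, h2, h3⟩ := hbuild k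
  exact ⟨B, h1, h2, i, fun S hS => (h3 S hS).1⟩

end FUsect

open Filter in
/-- The finite ordered finite-unions (Folkman) theorem. -/
theorem finite_FU (k r : ℕ) : ∃ n : ℕ, ∀ c : Finset ℕ → Fin r,
    ∃ B : Fin (k + 1) → Finset ℕ, (∀ j, (B j).Nonempty) ∧
      (∀ j, ∀ x ∈ B j, x < n) ∧
      (∀ j j' : Fin (k + 1), j < j' → ∀ a ∈ B j, ∀ b ∈ B j', a < b) ∧
      ∃ i, ∀ S : Finset (Fin (k + 1)), S.Nonempty → c (S.biUnion B) = i := by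
  classical
  by_contra hcon
  push_neg at hcon
  choose c hc using hcon
  set U := Filter.hyperfilter ℕ with hUdef
  have hex : ∀ F : Finset ℕ, ∃ i ∈ (Set.univ : Set (Fin r)), {n : ℕ | c n F = i} ∈ U := by
    intro F
    rw [← Ultrafilter.finite_biUnion_mem_iff (Set.finite_univ)]
    have : (⋃ i ∈ (Set.univ : Set (Fin r)), {n : ℕ | c n F = i}) = Set.univ := by
      ext n; simp
    rw [this]
    exact Filter.univ_mem
  choose cl hcl' hcl using hex
  obtain ⟨B, hne, hsep, i, hmono⟩ := infinite_FU r cl k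
  set N : ℕ := ((Finset.univ : Finset (Fin (k + 1))).biUnion B).sup id + 1 with hN
  have hbound : ∀ j, ∀ x ∈ B j, x < N := by
    intro j x hx
    have : x ≤ ((Finset.univ : Finset (Fin (k + 1))).biUnion B).sup id :=
      Finset.le_sup (f := id) (Finset.mem_biUnion.mpr ⟨j, Finset.mem_univ j, hx⟩)
    omega
  set P : Finset (Finset ℕ) :=
    (Finset.univ.powerset.filter (fun S : Finset (Fin (k + 1)) => S.Nonempty)).image
      (fun S => S.biUnion B) with hP
  have hagree : (⋂ p ∈ (P : Set (Finset ℕ)), {n : ℕ | c n p = cl p}) ∈ U :=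
    (Filter.biInter_mem P.finite_toSet).mpr (fun p _ => hcl p)
  have hbig : {n : ℕ | N ≤ n} ∈ U := by
    have : {n : ℕ | N ≤ n} ∈ (Filter.cofinite : Filter ℕ) := by
      rw [Filter.mem_cofinite]
      have : {n : ℕ | N ≤ n}ᶜ ⊆ Set.Iio N := fun n hn => by
        simp only [Set.mem_compl_iff, Set.mem_setOf_eq, not_le] at hn; exact hn
      exact (Set.finite_Iio N).subset this
    exact (Filter.hyperfilter_le_cofinite) this
  obtain ⟨n, hnagree, hnbig⟩ := Ultrafilter.nonempty_of_mem (Filter.inter_mem hagree hbig)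
  rw [Set.mem_iInter₂] at hnagree
  have hnN : N ≤ n := hnbig
  obtain ⟨S, hSne, hSbad⟩ := hc n B hne
    (fun j x hx => lt_of_lt_of_le (hbound j x hx) hnN) hsep i
  have hSP : S.biUnion B ∈ P := by
    rw [hP, Finset.mem_image]
    exact ⟨S, Finset.mem_filter.mpr ⟨Finset.mem_powerset.mpr (Finset.subset_univ _), hSne⟩, rfl⟩
  have : c n (S.biUnion B) = cl (S.biUnion B) := hnagree _ hSP
  rw [this, hmono S hSne] at hSbad
  exact hSbad rfl


section Assembly
variable {G : Type*} [Group G] {μ : Set G → ℝ}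

theorem FPdec_blocks_subset {n k : ℕ} (x : Fin (n + 1) → G)
    (B : Fin (k + 1) → Finset (Fin (n + 1)))
    (hne : ∀ j, (B j).Nonempty)
    (hsep : ∀ j j' : Fin (k + 1), j < j' → ∀ a ∈ B j, ∀ b ∈ B j', a < b) :
    FPdec (fun j => dprod x (B j)) ⊆ FPdec x := by
  rintro g ⟨S, hS, rfl⟩
  refine ⟨S.biUnion B, ?_, ?_⟩
  · obtain ⟨j, hj⟩ := hS
    obtain ⟨a, ha⟩ := hne j
    exact ⟨a, Finset.mem_biUnion.mpr ⟨j, hj, ha⟩⟩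
  · exact (dprod_biUnion x B hsep S).symm

end Assembly

theorem largeIP0_partition_regular {G : Type*} [Group G] (μ : Set G → ℝ)
    (hμ : IsInvFAPM μ) (A : Set G) (hA : LargeIP0 μ A) (r : ℕ)
    (C : Fin r → Set G) (hC : A = ⋃ i, C i) :
    ∃ i : Fin r, LargeIP0 μ (C i) := by
  classical
  -- a default color
  have hone : ∃ g, g ∈ A := by
    obtain ⟨x, hx⟩ := many_exists hμ 0 (hA 0)
    exact ⟨x 0, hx ⟨{0}, Finset.singleton_nonempty _, (dprod_singleton x 0).symm⟩⟩
  obtain ⟨g₀, hg₀⟩ := hone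
  obtain ⟨i₀, -⟩ := Set.mem_iUnion.mp (by rw [hC] at hg₀; exact hg₀)
  -- step: for each k some color works at level k
  have step : ∀ k : ℕ, ∃ i : Fin r,
      Many μ k (fun y : Fin (k + 1) → G => FPdec y ⊆ C i) := by
    intro k
    obtain ⟨n, hn⟩ := finite_FU k r
    have hpt : ∀ x : Fin (n + 1) → G, FPdec x ⊆ A →
        ∃ i : Fin r, ∃ BF : Fin (k + 1) → Finset (Fin (n + 1)),
          ((∀ j, (BF j).Nonempty) ∧
            (∀ j j' : Fin (k + 1), j < j' → ∀ a ∈ BF j, ∀ b ∈ BF j', a < b)) ∧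
          FPdec (fun j => dprod x (BF j)) ⊆ C i := by
      intro x hx
      set toF : Finset ℕ → Finset (Fin (n + 1)) :=
        fun F => F.preimage Fin.val (Fin.val_injective.injOn) with htoF
      have hmemtoF : ∀ (F : Finset ℕ) (u : Fin (n + 1)), u ∈ toF F ↔ u.val ∈ F :=
        fun F u => Finset.mem_preimage
      set col : Finset ℕ → Fin r := fun F =>
        if h : ∃ i : Fin r, dprod x (toF F) ∈ C i then h.choose else i₀ with hcol
      obtain ⟨B, hBne, hBbd, hBsep, i, hmono⟩ := hn col
      set BF : Fin (k + 1) → Finset (Fin (n + 1)) := fun j => toF (B j) with hBF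
      have hBFne : ∀ j, (BF j).Nonempty := by
        intro j
        obtain ⟨a, ha⟩ := hBne j
        exact ⟨⟨a, by have := hBbd j a ha; omega⟩, (hmemtoF _ _).mpr ha⟩
      have hBFsep : ∀ j j' : Fin (k + 1), j < j' → ∀ u ∈ BF j, ∀ v ∈ BF j', u < v := by
        intro j j' hjj u hu v hv
        exact Fin.lt_iff_val_lt_val.mpr
          (hBsep j j' hjj u.val ((hmemtoF _ _).mp hu) v.val ((hmemtoF _ _).mp hv))
      refine ⟨i, BF, ⟨hBFne, hBFsep⟩, ?_⟩
      rintro g ⟨S, hSne, rfl⟩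
      have hg1 : dprod (fun j => dprod x (BF j)) S = dprod x (S.biUnion BF) :=
        (dprod_biUnion x BF hBFsep S).symm
      have hbiu : toF (S.biUnion B) = S.biUnion BF := by
        ext u
        rw [hmemtoF, Finset.mem_biUnion, Finset.mem_biUnion]
        constructor
        · rintro ⟨j, hj, hu⟩
          exact ⟨j, hj, (hmemtoF _ _).mpr hu⟩
        · rintro ⟨j, hj, hu⟩
          exact ⟨j, hj, (hmemtoF _ _).mp hu⟩
      have hSBne : (S.biUnion BF).Nonempty := by
        obtain ⟨j, hj⟩ := hSne
        obtain ⟨a, ha⟩ := hBFne j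
        exact ⟨a, Finset.mem_biUnion.mpr ⟨j, hj, ha⟩⟩
      have hcu : col (S.biUnion B) = i := hmono S hSne
      have hmem : dprod x (S.biUnion BF) ∈ A := hx ⟨S.biUnion BF, hSBne, rfl⟩
      rw [hC] at hmem
      obtain ⟨i', hi'⟩ := Set.mem_iUnion.mp hmem
      have hexists : ∃ i'' : Fin r, dprod x (toF (S.biUnion B)) ∈ C i'' := by
        rw [hbiu]; exact ⟨i', hi'⟩
      have hcolval : col (S.biUnion B) = hexists.choose := by
        rw [hcol]; exact dif_pos hexists
      have hch : dprod x (toF (S.biUnion B)) ∈ C (col (S.biUnion B)) := by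
        rw [hcolval]; exact hexists.choose_spec
      rw [hcu, hbiu] at hch
      show dprod (fun j => dprod x (BF j)) S ∈ C i
      rw [hg1]
      exact hch
    have h1 : Many μ n (fun x => ∃ i : Fin r,
        ∃ BF : Fin (k + 1) → Finset (Fin (n + 1)),
          ((∀ j, (BF j).Nonempty) ∧
            (∀ j j' : Fin (k + 1), j < j' → ∀ a ∈ BF j, ∀ b ∈ BF j', a < b)) ∧
          FPdec (fun j => dprod x (BF j)) ⊆ C i) :=
      many_mono hμ n (fun x hx => hpt x hx) (hA n)
    obtain ⟨i, h2⟩ := many_choice hμ n _ h1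
    obtain ⟨BF, h3⟩ := many_choice hμ n _ h2
    obtain ⟨xw, ⟨⟨hne, hsep⟩, -⟩⟩ := many_exists hμ n h3
    have h4 : Many μ n (fun x =>
        (fun y => FPdec y ⊆ C i) (fun j => dprod x (BF j))) :=
      many_mono hμ n (fun x hx => hx.2) h3
    exact ⟨i, many_subst hμ n k BF hne hsep _ h4⟩
  -- downward closure in k
  have down : ∀ (i : Fin r) (k k' : ℕ), k ≤ k' →
      Many μ k' (fun y => FPdec y ⊆ C i) → Many μ k (fun y => FPdec y ⊆ C i) := by
    intro i k k' hkk h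
    have hkk1 : k + 1 ≤ k' + 1 := by omega
    set B : Fin (k + 1) → Finset (Fin (k' + 1)) :=
      fun j => {Fin.castLE hkk1 j} with hB
    have hne : ∀ j, (B j).Nonempty := fun j => Finset.singleton_nonempty _
    have hsep : ∀ j j' : Fin (k + 1), j < j' → ∀ a ∈ B j, ∀ b ∈ B j', a < b := by
      intro j j' hjj a ha b hb
      rw [hB] at ha hb
      rw [Finset.mem_singleton] at ha hb
      subst ha; subst hb
      exact Fin.lt_iff_val_lt_val.mpr (Fin.lt_iff_val_lt_val.mp hjj)
    refine many_subst hμ k' k B hne hsep _ ?_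
    refine many_mono hμ k' (fun x hx => ?_) h
    exact subset_trans (FPdec_blocks_subset x B hne hsep) hx
  choose f hf using step
  obtain ⟨i, hi⟩ := Finite.exists_infinite_fiber f
  refine ⟨i, fun k => ?_⟩
  have hinf : (f ⁻¹' {i}).Infinite := Set.infinite_coe_iff.mp hi
  obtain ⟨k', hk'mem, hk'ge⟩ := hinf.exists_gt k
  have hfk' : f k' = i := hk'mem
  exact down i k k' (le_of_lt hk'ge) (hfk' ▸ hf k')
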